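/- Under the stated assumptions, for every α > (log 2)^{−1/2}, the double integral ∫∫_{Ω×Ω} |x−y|^{−1} e^{−α·ϑ(log(1/|x−y|))} µ(dx) µ(dy) is finite. -/

import Mathlib

open MeasureTheory Filter Real

/-- The affine contraction used in the construction of the Cantor set: the left
(`b = false`) or right (`b = true`) branch with gap parameter `α`. -/
noncomputable def cantorBranch (α : ℝ) (b : Bool) (x : ℝ) : ℝ :=
  (1 - α) / 2 * x + if b then (1 + α) / 2 else 0

/-- The level-`n` basic interval of the Cantor construction indexed by `s : Fin n → Bool`,
with gap parameters `a 1, …, a n`. -/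
def cantorIntv : (a : ℕ → ℝ) → (n : ℕ) → (Fin n → Bool) → Set ℝ
  | _, 0, _ => Set.Icc 0 1
  | a, n + 1, s =>
      cantorBranch (a 1) (s 0) '' cantorIntv (fun k => a (k + 1)) n (fun i => s i.succ)

/-- The level-`n` approximation `A(a₁,…,a_n)` of the Cantor set. -/
def cantorApprox (a : ℕ → ℝ) (n : ℕ) : Set ℝ := ⋃ s : Fin n → Bool, cantorIntv a n s

/-- The Cantor set `Ω := ⋂_{n ≥ 1} A(a₁,…,a_n)`. -/
def cantorSetOf (a : ℕ → ℝ) : Set ℝ := ⋂ (n : ℕ) (_ : 1 ≤ n), cantorApprox a n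

/-! Two distinct points of `Ω` first separate at some level `n + 1`: they lie in the two children
of a common level-`n` basic interval, whose length is `ℓₙ = 2⁻ⁿ e^{-(ϑ(n) - ϑ(0))}`, so their
distance lies in `[aₙ₊₁ ℓₙ, ℓₙ]`. There are `2ⁿ⁺¹` such pairs of children, each of `μ ⊗ μ`-mass
`4⁻⁽ⁿ⁺¹⁾`, so the energy is at most `∑ₙ 2⁻⁽ⁿ⁺¹⁾ aₙ₊₁⁻¹ ℓₙ⁻¹ e^{-α ϑ(log (1/ℓₙ))}`.
Since `log (1/ℓₙ) ≥ n log 2` and `ϑ(c u) ≈ √c ϑ(u)`, the condition `α √(log 2) > 1` makes the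
exponential at most `e^{-(1 + ε) ϑ(n)}`, while `2⁻ⁿ ℓₙ⁻¹ ≤ e^{ϑ(n)}`. The doubling inequality
`ϑ(2u) ≥ q ϑ(u)`, `q > 1`, together with concavity gives `aₙ₊₁ ≳ 1/n`, and it also gives
polynomial growth of `ϑ`, so the terms are `O(n e^{-ε ϑ(n)}) = O(n⁻²)`. -/

open Set Asymptotics
open scoped ENNReal

noncomputable def cantorLength (a : ℕ → ℝ) (n : ℕ) : ℝ :=
  ∏ i ∈ Finset.range n, (1 - a (i + 1)) / 2

@[simp]
lemma cantorLength_zero (a : ℕ → ℝ) : cantorLength a 0 = 1 := Finset.prod_range_zero _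

lemma cantorLength_succ (a : ℕ → ℝ) (n : ℕ) :
    cantorLength a (n + 1) = cantorLength a n * ((1 - a (n + 1)) / 2) :=
  Finset.prod_range_succ _ n

lemma cantorLength_succ' (a : ℕ → ℝ) (n : ℕ) :
    cantorLength a (n + 1) = (1 - a 1) / 2 * cantorLength (fun k => a (k + 1)) n := by
  rw [cantorLength, Finset.prod_range_succ', mul_comm]
  rfl

lemma cantorBranch_add (α : ℝ) (b : Bool) (x y : ℝ) :
    cantorBranch α b (x + y) = cantorBranch α b x + (1 - α) / 2 * y := by
  simp only [cantorBranch]; ring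

lemma cantorBranch_image_Icc {α : ℝ} (hα : α < 1) (b : Bool) (x y : ℝ) :
    cantorBranch α b '' Icc x y = Icc (cantorBranch α b x) (cantorBranch α b y) :=
  image_affine_Icc' (by linarith) _ x y

lemma cantorIntv_cons (a : ℕ → ℝ) (n : ℕ) (b : Bool) (s : Fin n → Bool) :
    cantorIntv a (n + 1) (Fin.cons b s) =
      cantorBranch (a 1) b '' cantorIntv (fun k => a (k + 1)) n s :=
  rfl

/-- `cantorIntv` recurses on the first letter of the address; this describes the refinement of a
basic interval by the last letter. -/
lemma cantorIntv_snoc {a : ℕ → ℝ} (ha : ∀ k, 1 ≤ k → a k < 1) (n : ℕ) (t : Fin n → Bool) :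
    ∃ c, cantorIntv a n t = Icc c (c + cantorLength a n) ∧ ∀ b,
      cantorIntv a (n + 1) (Fin.snoc t b) =
        Icc (c + if b then (1 + a (n + 1)) / 2 * cantorLength a n else 0)
          ((c + if b then (1 + a (n + 1)) / 2 * cantorLength a n else 0) +
            cantorLength a (n + 1)) := by
  induction n generalizing a with
  | zero =>
    refine ⟨0, by rw [cantorLength_zero, zero_add]; rfl, fun b => ?_⟩
    have hsnoc : (Fin.snoc t b : Fin 1 → Bool) = Fin.cons b t := by ext i; fin_cases i; rfl
    rw [hsnoc, cantorIntv_cons, cantorIntv, cantorBranch_image_Icc (ha 1 le_rfl),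
      cantorLength_succ a 0, cantorLength_zero]
    simp only [cantorBranch]
    congr 1 <;> split_ifs <;> ring
  | succ n ih =>
    induction t using Fin.consCases with
    | _ x s =>
    obtain ⟨c, hs, hsb⟩ := ih (fun k hk => ha (k + 1) (by omega)) s
    have ha1 := ha 1 le_rfl
    refine ⟨cantorBranch (a 1) x c, ?_, fun b => ?_⟩
    · rw [cantorIntv_cons, hs, cantorBranch_image_Icc ha1, cantorBranch_add, cantorLength_succ']
    · rw [← Fin.cons_snoc_eq_snoc_cons, cantorIntv_cons, hsb, cantorBranch_image_Icc ha1,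
        cantorLength_succ' a (n + 1), cantorLength_succ' a n]
      split_ifs
      · simp only [cantorBranch_add]
        congr 1 <;> ring
      · simp only [add_zero, cantorBranch_add]

section Geometry

variable {a : ℕ → ℝ}

lemma cantorLength_pos (ha : ∀ k, 1 ≤ k → a k < 1) (n : ℕ) : 0 < cantorLength a n :=
  Finset.prod_pos fun i _ => by linarith [ha (i + 1) (by omega)]

lemma cantorLength_le_half_pow (ha : ∀ k, 1 ≤ k → a k ∈ Ioo 0 1) (n : ℕ) :
    cantorLength a n ≤ (1 / 2) ^ n := by
  induction n with
  | zero => simp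
  | succ n ih =>
    rw [cantorLength_succ, pow_succ]
    have han := ha (n + 1) (by omega)
    exact mul_le_mul ih (by linarith [han.1]) (by linarith [han.2]) (by positivity)

lemma cantorLength_le_one (ha : ∀ k, 1 ≤ k → a k ∈ Ioo 0 1) (n : ℕ) : cantorLength a n ≤ 1 :=
  (cantorLength_le_half_pow ha n).trans (pow_le_one₀ (by norm_num) (by norm_num))

lemma cantorIntv_eq_Icc (ha : ∀ k, 1 ≤ k → a k < 1) (n : ℕ) (s : Fin n → Bool) :
    ∃ c, cantorIntv a n s = Icc c (c + cantorLength a n) :=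
  (cantorIntv_snoc ha n s).imp fun _ h => h.1

lemma measurableSet_cantorIntv (ha : ∀ k, 1 ≤ k → a k < 1) (n : ℕ) (s : Fin n → Bool) :
    MeasurableSet (cantorIntv a n s) := by
  obtain ⟨c, hc⟩ := cantorIntv_eq_Icc ha n s
  exact hc ▸ measurableSet_Icc

lemma measurableSet_cantorSetOf (ha : ∀ k, 1 ≤ k → a k < 1) : MeasurableSet (cantorSetOf a) :=
  .iInter fun n => .iInter fun _ => .iUnion fun s => measurableSet_cantorIntv ha n s

lemma abs_sub_le_cantorLength (ha : ∀ k, 1 ≤ k → a k < 1) {n : ℕ} {s : Fin n → Bool}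
    {x y : ℝ} (hx : x ∈ cantorIntv a n s) (hy : y ∈ cantorIntv a n s) :
    |x - y| ≤ cantorLength a n := by
  obtain ⟨c, hc⟩ := cantorIntv_eq_Icc ha n s
  rw [hc] at hx hy
  exact abs_sub_le_iff.2 ⟨by linarith [hx.2, hy.1], by linarith [hx.1, hy.2]⟩

lemma cantorIntv_snoc_subset (ha : ∀ k, 1 ≤ k → a k ∈ Ioo 0 1) (n : ℕ) (t : Fin n → Bool)
    (b : Bool) : cantorIntv a (n + 1) (Fin.snoc t b) ⊆ cantorIntv a n t := by
  obtain ⟨c, ht, htb⟩ := cantorIntv_snoc (fun k hk => (ha k hk).2) n t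
  have hℓ := cantorLength_pos (fun k hk => (ha k hk).2) n
  have han := ha (n + 1) (by omega)
  rw [ht, htb, cantorLength_succ]
  apply Icc_subset_Icc <;> split_ifs <;> nlinarith [han.1, han.2]

lemma mul_cantorLength_le_abs_sub (ha : ∀ k, 1 ≤ k → a k < 1) {n : ℕ} {t : Fin n → Bool}
    {b : Bool} {x y : ℝ} (hx : x ∈ cantorIntv a (n + 1) (Fin.snoc t b))
    (hy : y ∈ cantorIntv a (n + 1) (Fin.snoc t !b)) :
    a (n + 1) * cantorLength a n ≤ |x - y| := by
  obtain ⟨c, -, hI⟩ := cantorIntv_snoc ha n t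
  rw [hI, cantorLength_succ] at hx hy
  cases b
  · exact abs_sub_comm x y ▸ le_abs.2 (Or.inl (by simp at hx hy; linarith [hx.2, hy.1]))
  · exact le_abs.2 (Or.inl (by simp at hx hy; linarith [hx.1, hy.2]))

lemma eq_of_mem_cantorIntv (ha : ∀ k, 1 ≤ k → a k ∈ Ioo 0 1) {x : ℝ} :
    ∀ {n : ℕ} {s s' : Fin n → Bool}, x ∈ cantorIntv a n s → x ∈ cantorIntv a n s' → s = s'
  | 0, _, _, _, _ => Subsingleton.elim _ _
  | n + 1, s, s', hs, hs' => by
    induction s using Fin.snocCases with | _ t b =>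
    induction s' using Fin.snocCases with | _ t' b' =>
    obtain rfl := eq_of_mem_cantorIntv ha (cantorIntv_snoc_subset ha n t b hs)
      (cantorIntv_snoc_subset ha n t' b' hs')
    obtain rfl | rfl : b' = b ∨ b' = !b := by cases b <;> cases b' <;> simp
    · rfl
    · have hgap := mul_cantorLength_le_abs_sub (fun k hk => (ha k hk).2) hs hs'
      rw [sub_self, abs_zero] at hgap
      exact absurd hgap (mul_pos (ha (n + 1) (by omega)).1
        (cantorLength_pos (fun k hk => (ha k hk).2) n)).not_ge

lemma exists_mem_cantorIntv (ha : ∀ k, 1 ≤ k → a k ∈ Ioo 0 1) {x : ℝ} (hx : x ∈ cantorSetOf a)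
    (n : ℕ) : ∃ s : Fin n → Bool, x ∈ cantorIntv a n s := by
  have hx' : ∀ n, 1 ≤ n → ∃ s : Fin n → Bool, x ∈ cantorIntv a n s := by
    simpa [cantorSetOf, cantorApprox] using hx
  rcases n with _ | n
  · obtain ⟨s, hs⟩ := hx' 1 le_rfl
    exact ⟨Fin.init s, cantorIntv_snoc_subset ha 0 _ _ (Fin.snoc_init_self s ▸ hs)⟩
  · exact hx' (n + 1) (by omega)

lemma exists_mem_cantorIntv_snoc_of_ne (ha : ∀ k, 1 ≤ k → a k ∈ Ioo 0 1) {x y : ℝ}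
    (hx : x ∈ cantorSetOf a) (hy : y ∈ cantorSetOf a) (hxy : x ≠ y) :
    ∃ n t b, x ∈ cantorIntv a (n + 1) (Fin.snoc t b) ∧
      y ∈ cantorIntv a (n + 1) (Fin.snoc t !b) := by
  set P : ℕ → Prop := fun n => ∃ s, x ∈ cantorIntv a n s ∧ y ∈ cantorIntv a n s
  have hP0 : P 0 := by
    obtain ⟨s, hs⟩ := exists_mem_cantorIntv ha hx 0
    obtain ⟨s', hs'⟩ := exists_mem_cantorIntv ha hy 0
    exact ⟨s, hs, Subsingleton.elim s' s ▸ hs'⟩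
  obtain ⟨N, hN⟩ := exists_pow_lt_of_lt_one (abs_pos.2 (sub_ne_zero.2 hxy))
    (by norm_num : (1 / 2 : ℝ) < 1)
  have hPN : ¬ P N := fun ⟨s, hxs, hys⟩ =>
    ((abs_sub_le_cantorLength (fun k hk => (ha k hk).2) hxs hys).trans
      (cantorLength_le_half_pow ha N)).not_gt hN
  obtain ⟨n, ⟨t, hxt, hyt⟩, hn⟩ : ∃ n, P n ∧ ¬ P (n + 1) := by
    by_contra! h
    exact hPN (Nat.rec hP0 h N)
  obtain ⟨u, hu⟩ := exists_mem_cantorIntv ha hx (n + 1)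
  obtain ⟨v, hv⟩ := exists_mem_cantorIntv ha hy (n + 1)
  induction u using Fin.snocCases with | _ tu bu =>
  induction v using Fin.snocCases with | _ tv bv =>
  obtain rfl := eq_of_mem_cantorIntv ha (cantorIntv_snoc_subset ha n _ _ hu) hxt
  obtain rfl := eq_of_mem_cantorIntv ha (cantorIntv_snoc_subset ha n _ _ hv) hyt
  obtain rfl | rfl : bv = !bu ∨ bv = bu := by cases bu <;> cases bv <;> simp
  · exact ⟨n, _, bu, hu, hv⟩
  · exact absurd ⟨_, hu, hv⟩ hn

lemma lintegral_cantorSetOf_prod_le (ha : ∀ k, 1 ≤ k → a k ∈ Ioo 0 1)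
    (μ : Measure ℝ) [SFinite μ] (hμ : ∀ n s, μ (cantorIntv a n s) = 2⁻¹ ^ n)
    {F : ℝ × ℝ → ℝ≥0∞} {C : ℕ → ℝ≥0∞} (hdiag : ∀ x, F (x, x) = 0)
    (hF : ∀ n t b x y, x ∈ cantorIntv a (n + 1) (Fin.snoc t b) →
      y ∈ cantorIntv a (n + 1) (Fin.snoc t !b) → F (x, y) ≤ C n) :
    ∫⁻ p in cantorSetOf a ×ˢ cantorSetOf a, F p ∂μ.prod μ ≤ ∑' n, 2⁻¹ ^ (n + 1) * C n := by
  have ha' : ∀ k, 1 ≤ k → a k < 1 := fun k hk => (ha k hk).2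
  let piece (i : Σ n, (Fin n → Bool) × Bool) : Set (ℝ × ℝ) :=
    cantorIntv a (i.1 + 1) (Fin.snoc i.2.1 i.2.2) ×ˢ
      cantorIntv a (i.1 + 1) (Fin.snoc i.2.1 !i.2.2)
  let H (p : ℝ × ℝ) : ℝ≥0∞ := ∑' i, (piece i).indicator (fun _ => C i.1) p
  have hpiece i : MeasurableSet (piece i) :=
    (measurableSet_cantorIntv ha' _ _).prod (measurableSet_cantorIntv ha' _ _)
  have hFH : ∀ p ∈ cantorSetOf a ×ˢ cantorSetOf a, F p ≤ H p := by
    rintro ⟨x, y⟩ ⟨hx, hy⟩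
    rcases eq_or_ne x y with rfl | hxy
    · simp [hdiag]
    obtain ⟨n, t, b, hxI, hyI⟩ := exists_mem_cantorIntv_snoc_of_ne ha hx hy hxy
    calc F (x, y) ≤ (piece ⟨n, t, b⟩).indicator (fun _ => C n) (x, y) := by
          rw [indicator_of_mem (show (x, y) ∈ piece ⟨n, t, b⟩ from ⟨hxI, hyI⟩)]
          exact hF n t b x y hxI hyI
      _ ≤ H (x, y) := ENNReal.le_tsum (f := fun i => (piece i).indicator (fun _ => C i.1) (x, y)) _
  calc ∫⁻ p in cantorSetOf a ×ˢ cantorSetOf a, F p ∂μ.prod μ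
      ≤ ∫⁻ p in cantorSetOf a ×ˢ cantorSetOf a, H p ∂μ.prod μ :=
        setLIntegral_mono' ((measurableSet_cantorSetOf ha').prod (measurableSet_cantorSetOf ha'))
          hFH
    _ ≤ ∫⁻ p, H p ∂μ.prod μ := setLIntegral_le_lintegral _ _
    _ = ∑' i, C i.1 * (μ.prod μ) (piece i) := by
        rw [lintegral_tsum fun i => (measurable_const.indicator (hpiece i)).aemeasurable]
        exact tsum_congr fun i => lintegral_indicator_const (hpiece i) _
    _ = ∑' n, 2⁻¹ ^ (n + 1) * C n := by
        rw [ENNReal.tsum_sigma']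
        refine tsum_congr fun n => ?_
        simp only [piece, Measure.prod_prod, hμ, tsum_fintype, Finset.sum_const,
          Finset.card_univ, Fintype.card_prod, Fintype.card_fun, Fintype.card_bool,
          Fintype.card_fin, nsmul_eq_mul]
        have htwo : (2 : ℝ≥0∞) ^ (n + 1) * 2⁻¹ ^ (n + 1) = 1 := by
          rw [← mul_pow, ENNReal.mul_inv_cancel two_ne_zero ENNReal.ofNat_ne_top, one_pow]
        push_cast
        rw [← pow_succ, ← one_mul (2⁻¹ ^ (n + 1) * C n), ← htwo]
        ring

end Geometry

def SlowlyVarying (L : ℝ → ℝ) : Prop :=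
  ∀ c : ℝ, 0 < c → Tendsto (fun u => L (c * u) / L u) atTop (nhds 1)

section RegularVariation

variable {ϑ L : ℝ → ℝ}

lemma SlowlyVarying.eventually_pos (hL : SlowlyVarying L) (hϑ_nonneg : ∀ u, 0 ≤ u → 0 ≤ ϑ u)
    (hϑL : ∀ u, 1 ≤ u → ϑ u = √u * L u) : ∀ᶠ u in atTop, 0 < L u := by
  have hne : ∀ᶠ u in atTop, L u ≠ 0 :=
    ((hL 2 two_pos).eventually_ne one_ne_zero).mono fun u h h0 => h (by rw [h0, div_zero])
  filter_upwards [hne, eventually_ge_atTop 1] with u hne hu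
  have hprod : 0 ≤ √u * L u := hϑL u hu ▸ hϑ_nonneg u (by linarith)
  exact (nonneg_of_mul_nonneg_right hprod (sqrt_pos.2 (by linarith))).lt_of_ne' hne

lemma SlowlyVarying.eventually_mul_le_of_lt_sqrt (hL : SlowlyVarying L)
    (hϑ_nonneg : ∀ u, 0 ≤ u → 0 ≤ ϑ u) (hϑL : ∀ u, 1 ≤ u → ϑ u = √u * L u) {c β : ℝ}
    (hc : 0 < c) (hβ : β < √c) : ∀ᶠ u in atTop, β * ϑ u ≤ ϑ (c * u) := by
  have hsc : 0 < √c := sqrt_pos.2 hc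
  have hρ : β / √c < 1 := (div_lt_one hsc).2 hβ
  filter_upwards [(hL c hc).eventually (eventually_gt_nhds hρ), eventually_ge_atTop 1,
    (tendsto_id.const_mul_atTop hc).eventually_ge_atTop 1,
    hL.eventually_pos hϑ_nonneg hϑL] with u hρu hu hcu hLu
  rw [hϑL u hu, hϑL (c * u) hcu, sqrt_mul hc.le]
  have hρL : β / √c * L u ≤ L (c * u) := ((lt_div_iff₀ hLu).1 hρu).le
  calc β * (√u * L u) = √c * √u * (β / √c * L u) := by field_simp
    _ ≤ √c * √u * L (c * u) := by gcongr

lemma SlowlyVarying.exists_doubling (hL : SlowlyVarying L) (hϑ_nonneg : ∀ u, 0 ≤ u → 0 ≤ ϑ u)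
    (hϑL : ∀ u, 1 ≤ u → ϑ u = √u * L u) :
    ∃ q, 1 < q ∧ ∃ u₀, 0 < u₀ ∧ 0 < ϑ u₀ ∧ ∀ u ≥ u₀, q * ϑ u ≤ ϑ (2 * u) := by
  have hq : (4 / 3 : ℝ) < √2 := (lt_sqrt (by norm_num)).2 (by norm_num)
  obtain ⟨u₀, hu₀⟩ := eventually_atTop.1
    ((hL.eventually_mul_le_of_lt_sqrt hϑ_nonneg hϑL two_pos hq).and
      ((hL.eventually_pos hϑ_nonneg hϑL).and (eventually_ge_atTop 1)))
  obtain ⟨-, hLu₀, hu₀1⟩ := hu₀ u₀ le_rfl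
  refine ⟨4 / 3, by norm_num, u₀, by linarith, ?_, fun u hu => (hu₀ u hu).1⟩
  rw [hϑL u₀ hu₀1]
  exact mul_pos (sqrt_pos.2 (by linarith)) hLu₀

end RegularVariation

section Doubling

variable {ϑ : ℝ → ℝ} {q u₀ : ℝ}

lemma mul_rpow_le_of_doubling (hmono : MonotoneOn ϑ (Ici 0)) (hq : 1 < q) (hu₀ : 0 < u₀)
    (hϑu₀ : 0 ≤ ϑ u₀) (hdbl : ∀ u ≥ u₀, q * ϑ u ≤ ϑ (2 * u)) :
    ∀ u ≥ u₀, ϑ u₀ / (2 * u₀) ^ logb 2 q * u ^ logb 2 q ≤ ϑ u := by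
  set κ := logb 2 q
  set c := ϑ u₀ / (2 * u₀) ^ κ
  have hκ : 0 ≤ κ := (logb_pos one_lt_two hq).le
  have hc : 0 ≤ c := by positivity
  suffices ∀ k : ℕ, ∀ u, u₀ ≤ u → u ≤ 2 ^ k * u₀ → c * u ^ κ ≤ ϑ u by
    intro u hu
    obtain ⟨k, hk⟩ := pow_unbounded_of_one_lt (u / u₀) one_lt_two
    exact this k u hu ((div_lt_iff₀ hu₀).1 hk).le
  have hbase : ∀ u, u₀ ≤ u → u ≤ 2 * u₀ → c * u ^ κ ≤ ϑ u := fun u hu hu' =>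
    calc c * u ^ κ ≤ c * (2 * u₀) ^ κ := by gcongr; linarith
      _ = ϑ u₀ := div_mul_cancel₀ _ (by positivity)
      _ ≤ ϑ u := hmono (mem_Ici.2 hu₀.le) (mem_Ici.2 (by linarith)) hu
  intro k
  induction k with
  | zero => exact fun u hu hu' => hbase u hu (by linarith)
  | succ k ih =>
    intro u hu hu'
    rcases le_or_gt u (2 * u₀) with hu2 | hu2
    · exact hbase u hu hu2
    have hhalf := ih (u / 2) (by linarith) (by rw [pow_succ] at hu'; linarith)
    calc c * u ^ κ = q * (c * (u / 2) ^ κ) := by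
          rw [div_rpow (by linarith) zero_le_two, rpow_logb two_pos (by norm_num) (by linarith)]
          field_simp
      _ ≤ q * ϑ (u / 2) := by gcongr
      _ ≤ ϑ u := by simpa [mul_div_cancel₀] using hdbl (u / 2) (by linarith)

lemma isLittleO_log_of_doubling (hmono : MonotoneOn ϑ (Ici 0)) (hq : 1 < q) (hu₀ : 0 < u₀)
    (hϑu₀ : 0 < ϑ u₀) (hdbl : ∀ u ≥ u₀, q * ϑ u ≤ ϑ (2 * u)) : log =o[atTop] ϑ := by
  set c := ϑ u₀ / (2 * u₀) ^ logb 2 q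
  have hc : 0 < c := by positivity
  refine (isLittleO_log_rpow_atTop (logb_pos one_lt_two hq)).trans_isBigO
    (IsBigO.of_bound c⁻¹ ?_)
  filter_upwards [eventually_ge_atTop u₀] with u hu
  have hϑu : 0 ≤ ϑ u := hϑu₀.le.trans (hmono (mem_Ici.2 hu₀.le) (mem_Ici.2 (by linarith)) hu)
  rw [norm_of_nonneg (rpow_nonneg (by linarith) _), norm_of_nonneg hϑu, inv_mul_eq_div,
    le_div_iff₀' hc]
  exact mul_rpow_le_of_doubling hmono hq hu₀ hϑu₀.le hdbl u hu

lemma exists_div_le_sub_of_doubling (hmono : MonotoneOn ϑ (Ici 0))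
    (hconc : ConcaveOn ℝ (Ici 0) ϑ) (hq : 1 < q) (hu₀ : 0 < u₀) (hϑu₀ : 0 < ϑ u₀)
    (hdbl : ∀ u ≥ u₀, q * ϑ u ≤ ϑ (2 * u)) :
    ∃ K > 0, ∀ᶠ n : ℕ in atTop, K / (n + 1) ≤ ϑ (n + 1) - ϑ n := by
  refine ⟨(q - 1) * ϑ u₀, by nlinarith, ?_⟩
  filter_upwards [(tendsto_natCast_atTop_atTop (R := ℝ)).eventually_ge_atTop u₀] with n hn
  have hslope := hconc.slope_anti_adjacent (x := n) (y := n + 1) (z := 2 * (n + 1))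
    (mem_Ici.2 n.cast_nonneg) (mem_Ici.2 (by positivity)) (by linarith) (by linarith)
  rw [show (n : ℝ) + 1 - n = 1 by ring, div_one,
    show 2 * ((n : ℝ) + 1) - (n + 1) = n + 1 by ring] at hslope
  have hgrow : ϑ u₀ ≤ ϑ (n + 1) :=
    hmono (mem_Ici.2 hu₀.le) (mem_Ici.2 (by positivity)) (by linarith)
  calc (q - 1) * ϑ u₀ / (n + 1) ≤ (ϑ (2 * (n + 1)) - ϑ (n + 1)) / (n + 1) := by
        gcongr
        nlinarith [hdbl (n + 1) (by linarith)]
    _ ≤ ϑ (n + 1) - ϑ n := hslope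

end Doubling

lemma inv_one_sub_exp_neg_le_mul {K t x : ℝ} (hK : 0 < K) (hx : 1 ≤ x) (ht : K / x ≤ t) :
    (1 - exp (-t))⁻¹ ≤ (1 + K⁻¹) * x := by
  have ht0 : 0 < t := (div_pos hK (by linarith)).trans_le ht
  have hexp : t + 1 ≤ exp t := add_one_le_exp t
  have hsplit : 1 - exp (-t) = (exp t - 1) / exp t := by rw [exp_neg]; field_simp
  calc (1 - exp (-t))⁻¹ = 1 + (exp t - 1)⁻¹ := by
        rw [hsplit, inv_div]; field_simp [(by linarith : 0 < exp t - 1).ne']; ring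
    _ ≤ 1 + t⁻¹ := by gcongr; linarith
    _ ≤ 1 + x / K := by gcongr; rw [← inv_div]; exact inv_anti₀ (by positivity) ht
    _ ≤ (1 + K⁻¹) * x := by
        rw [div_eq_mul_inv]; nlinarith [inv_pos.2 hK]

lemma summable_mul_exp_neg_of_isLittleO {f : ℕ → ℝ} (hf : (fun n : ℕ => log n) =o[atTop] f)
    (hf0 : ∀ᶠ n in atTop, 0 ≤ f n) : Summable fun n : ℕ => ((n : ℝ) + 1) * exp (-f n) := by
  refine Summable.of_norm_bounded_eventually_nat
    ((summable_one_div_nat_pow.2 one_lt_two).mul_left 2) ?_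
  filter_upwards [hf.bound (by norm_num : (0 : ℝ) < 1 / 3), hf0, eventually_ge_atTop 1]
    with n hlog hfn hn
  have hn' : (1 : ℝ) ≤ n := by exact_mod_cast hn
  rw [norm_of_nonneg (log_nonneg hn'), norm_of_nonneg hfn] at hlog
  rw [norm_of_nonneg (by positivity)]
  have hexp : exp (-f n) ≤ ((n : ℝ) ^ 3)⁻¹ := by
    rw [← exp_log (by positivity : (0 : ℝ) < n ^ 3), ← exp_neg, log_pow]
    gcongr
    push_cast
    linarith
  calc ((n : ℝ) + 1) * exp (-f n) ≤ (2 * n) * ((n : ℝ) ^ 3)⁻¹ := by gcongr; linarith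
    _ = 2 * (1 / (n : ℝ) ^ 2) := by field_simp

noncomputable def energyKernel (ϑ : ℝ → ℝ) (α r : ℝ) : ℝ := r⁻¹ * exp (-α * ϑ (log (1 / r)))

section Energy

variable {ϑ : ℝ → ℝ} {a : ℕ → ℝ} {α : ℝ}

lemma energyKernel_le_inv_mul (hmono : MonotoneOn ϑ (Ici 0)) {c ℓ r : ℝ} (hα : 0 ≤ α)
    (hc : 0 < c) (hℓ : 0 < ℓ) (hℓ1 : ℓ ≤ 1) (hcr : c * ℓ ≤ r) (hrℓ : r ≤ ℓ) :
    energyKernel ϑ α r ≤ c⁻¹ * energyKernel ϑ α ℓ := by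
  have hr : 0 < r := (mul_pos hc hℓ).trans_le hcr
  have hlogℓ : 0 ≤ log (1 / ℓ) := log_nonneg (one_le_one_div hℓ hℓ1)
  have hlog : log (1 / ℓ) ≤ log (1 / r) :=
    log_le_log (by positivity) (one_div_le_one_div_of_le hr hrℓ)
  have hϑ : ϑ (log (1 / ℓ)) ≤ ϑ (log (1 / r)) := hmono hlogℓ (hlogℓ.trans hlog) hlog
  calc r⁻¹ * exp (-α * ϑ (log (1 / r))) ≤ (c * ℓ)⁻¹ * exp (-α * ϑ (log (1 / ℓ))) :=
        mul_le_mul (inv_anti₀ (by positivity) hcr) (exp_le_exp.2 (by nlinarith))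
          (exp_pos _).le (by positivity)
    _ = c⁻¹ * energyKernel ϑ α ℓ := by rw [energyKernel, mul_inv, mul_assoc]

lemma energyKernel_le_of_mem_cantorIntv_snoc (hmono : MonotoneOn ϑ (Ici 0)) (hα : 0 ≤ α)
    (ha : ∀ k, 1 ≤ k → a k ∈ Ioo 0 1) {n : ℕ} {t : Fin n → Bool} {b : Bool} {x y : ℝ}
    (hx : x ∈ cantorIntv a (n + 1) (Fin.snoc t b))
    (hy : y ∈ cantorIntv a (n + 1) (Fin.snoc t !b)) :
    energyKernel ϑ α |x - y| ≤ (a (n + 1))⁻¹ * energyKernel ϑ α (cantorLength a n) :=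
  have ha' : ∀ k, 1 ≤ k → a k < 1 := fun k hk => (ha k hk).2
  energyKernel_le_inv_mul hmono hα (ha (n + 1) n.succ_pos).1 (cantorLength_pos ha' n)
    (cantorLength_le_one ha n) (mul_cantorLength_le_abs_sub ha' hx hy)
    (abs_sub_le_cantorLength ha' (cantorIntv_snoc_subset ha n t b hx)
      (cantorIntv_snoc_subset ha n t _ hy))

lemma succ_eq_one_sub_exp_neg (ha : ∀ n : ℕ, a n = 1 - exp (-(ϑ n - ϑ (n - 1)))) (n : ℕ) :
    a (n + 1) = 1 - exp (-(ϑ (n + 1) - ϑ n)) := by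
  rw [ha]; push_cast; ring_nf

lemma cantorLength_eq_exp (ha : ∀ n : ℕ, a n = 1 - exp (-(ϑ n - ϑ (n - 1)))) (n : ℕ) :
    cantorLength a n = 2⁻¹ ^ n * exp (-(ϑ n - ϑ 0)) := by
  induction n with
  | zero => simp
  | succ n ih =>
    rw [cantorLength_succ, ih, succ_eq_one_sub_exp_neg ha, Nat.cast_succ,
      show -(ϑ (n + 1) - ϑ 0) = -(ϑ n - ϑ 0) + -(ϑ (n + 1) - ϑ n) by ring, exp_add]
    ring

lemma half_pow_mul_energyKernel_cantorLength_le (hmono : MonotoneOn ϑ (Ici 0))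
    (hϑ0 : 0 ≤ ϑ 0) (hα : 0 ≤ α) (ha : ∀ n : ℕ, a n = 1 - exp (-(ϑ n - ϑ (n - 1)))) (n : ℕ) :
    2⁻¹ ^ (n + 1) * energyKernel ϑ α (cantorLength a n) ≤ exp (ϑ n - α * ϑ (log 2 * n)) := by
  have hϑn : ϑ 0 ≤ ϑ n := hmono self_mem_Ici (mem_Ici.2 n.cast_nonneg) n.cast_nonneg
  have hlog : log (1 / cantorLength a n) = log 2 * n + (ϑ n - ϑ 0) := by
    rw [cantorLength_eq_exp ha, one_div, log_inv, log_mul (by positivity) (exp_pos _).ne',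
      log_pow, log_inv, log_exp]
    ring
  have hinv : 2⁻¹ ^ (n + 1) * (cantorLength a n)⁻¹ = exp (ϑ n - ϑ 0) / 2 := by
    rw [cantorLength_eq_exp ha, mul_inv, ← exp_neg, neg_neg, pow_succ]
    field_simp
  have hϑlog : ϑ (log 2 * n) ≤ ϑ (log (1 / cantorLength a n)) :=
    hmono (mem_Ici.2 (by positivity)) (mem_Ici.2 (by rw [hlog]; positivity))
      (by rw [hlog]; linarith)
  calc 2⁻¹ ^ (n + 1) * energyKernel ϑ α (cantorLength a n)
      = exp (ϑ n - ϑ 0) / 2 * exp (-α * ϑ (log (1 / cantorLength a n))) := by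
        rw [energyKernel, ← mul_assoc, hinv]
    _ ≤ exp (ϑ n) * exp (-α * ϑ (log 2 * n)) :=
        mul_le_mul (by linarith [exp_pos (ϑ n - ϑ 0), exp_le_exp.2 (by linarith : ϑ n - ϑ 0 ≤ ϑ n)])
          (exp_le_exp.2 (by nlinarith)) (exp_pos _).le (exp_pos _).le
    _ = exp (ϑ n - α * ϑ (log 2 * n)) := by rw [← exp_add]; ring_nf

lemma norm_energy_term_le (hmono : MonotoneOn ϑ (Ici 0)) (hϑ0 : 0 ≤ ϑ 0) (hα : 0 ≤ α)
    (ha : ∀ n : ℕ, a n = 1 - exp (-(ϑ n - ϑ (n - 1)))) {K β : ℝ} {n : ℕ} (hK : 0 < K)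
    (hKn : K / (n + 1) ≤ ϑ (n + 1) - ϑ n) (hβn : β * ϑ n ≤ ϑ (log 2 * n)) :
    ‖2⁻¹ ^ (n + 1) * ((a (n + 1))⁻¹ * energyKernel ϑ α (cantorLength a n))‖ ≤
      (1 + K⁻¹) * ((n + 1) * exp (-((α * β - 1) * ϑ n))) := by
  have hainv : (a (n + 1))⁻¹ ≤ (1 + K⁻¹) * (n + 1) :=
    succ_eq_one_sub_exp_neg ha n ▸
      inv_one_sub_exp_neg_le_mul hK (le_add_of_nonneg_left n.cast_nonneg) hKn
  have ha_nonneg : 0 ≤ a (n + 1) := by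
    rw [succ_eq_one_sub_exp_neg ha, sub_nonneg, exp_le_one_iff, neg_nonpos]
    exact (by positivity : 0 ≤ K / (n + 1)).trans hKn
  have hℓ : 0 < cantorLength a n := by rw [cantorLength_eq_exp ha]; positivity
  have hterm : 0 ≤ 2⁻¹ ^ (n + 1) * energyKernel ϑ α (cantorLength a n) := by
    unfold energyKernel; positivity
  rw [mul_left_comm, norm_of_nonneg (mul_nonneg (inv_nonneg.2 ha_nonneg) hterm)]
  calc (a (n + 1))⁻¹ * (2⁻¹ ^ (n + 1) * energyKernel ϑ α (cantorLength a n))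
      ≤ ((1 + K⁻¹) * (n + 1)) * exp (ϑ n - α * ϑ (log 2 * n)) :=
        mul_le_mul hainv (half_pow_mul_energyKernel_cantorLength_le hmono hϑ0 hα ha n) hterm
          (by positivity)
    _ ≤ ((1 + K⁻¹) * (n + 1)) * exp (-((α * β - 1) * ϑ n)) := by
        gcongr; nlinarith [mul_le_mul_of_nonneg_left hβn hα]
    _ = (1 + K⁻¹) * ((n + 1) * exp (-((α * β - 1) * ϑ n))) := by ring

lemma summable_energy_series {L : ℝ → ℝ} (hmono : MonotoneOn ϑ (Ici 0))
    (hconc : ConcaveOn ℝ (Ici 0) ϑ) (hnonneg : ∀ u, 0 ≤ u → 0 ≤ ϑ u)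
    (hϑL : ∀ u, 1 ≤ u → ϑ u = √u * L u) (hL : SlowlyVarying L)
    (ha : ∀ n : ℕ, a n = 1 - exp (-(ϑ n - ϑ (n - 1)))) (hα : 1 / √(log 2) < α) :
    Summable fun n =>
      2⁻¹ ^ (n + 1) * ((a (n + 1))⁻¹ * energyKernel ϑ α (cantorLength a n)) := by
  have hα0 : 0 < α := (by positivity : (0 : ℝ) < 1 / √(log 2)).trans hα
  obtain ⟨β, hαβ, hβ⟩ := exists_between ((one_div_lt (by positivity) hα0).1 hα)
  rw [div_lt_iff₀ hα0, mul_comm] at hαβ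
  obtain ⟨q, hq, u₀, hu₀, hϑu₀, hdbl⟩ := hL.exists_doubling hnonneg hϑL
  obtain ⟨K, hK, hinc⟩ := exists_div_le_sub_of_doubling hmono hconc hq hu₀ hϑu₀ hdbl
  have hsum : Summable fun n : ℕ => ((n : ℝ) + 1) * exp (-((α * β - 1) * ϑ n)) :=
    summable_mul_exp_neg_of_isLittleO
      (((isLittleO_log_of_doubling hmono hq hu₀ hϑu₀ hdbl).comp_tendsto
        tendsto_natCast_atTop_atTop).const_mul_right (by linarith))
      (.of_forall fun n => mul_nonneg (by linarith) (hnonneg n n.cast_nonneg))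
  refine Summable.of_norm_bounded_eventually_nat (hsum.mul_left (1 + K⁻¹)) ?_
  filter_upwards [tendsto_natCast_atTop_atTop.eventually
    (hL.eventually_mul_le_of_lt_sqrt hnonneg hϑL (log_pos one_lt_two) hβ), hinc]
    with n hβn hKn
  exact norm_energy_term_le hmono (hnonneg 0 le_rfl) hα0.le ha hK hKn hβn

end Energy

theorem cantor_measure_energy_finite_general
    (ϑ : ℝ → ℝ)
    (hϑ_mono : MonotoneOn ϑ (Set.Ici 0))
    (hϑ_concave : ConcaveOn ℝ (Set.Ici 0) ϑ)
    (hϑ_nonneg : ∀ u, 0 ≤ u → 0 ≤ ϑ u)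
    (L : ℝ → ℝ)
    (hϑL : ∀ u : ℝ, 1 ≤ u → ϑ u = Real.sqrt u * L u)
    (hL_slow : ∀ c : ℝ, 0 < c → Tendsto (fun u => L (c * u) / L u) atTop (nhds 1))
    (a : ℕ → ℝ)
    (ha : ∀ n : ℕ, a n = 1 - Real.exp (-(ϑ (n : ℝ) - ϑ ((n : ℝ) - 1))))
    (ha01 : ∀ n : ℕ, 1 ≤ n → a n ∈ Set.Ioo (0 : ℝ) 1)
    (μ : Measure ℝ) [IsProbabilityMeasure μ]
    (hμ : ∀ (n : ℕ) (s : Fin n → Bool), μ (cantorIntv a n s) = (2 : ENNReal)⁻¹ ^ n)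
    (α : ℝ) (hα : 1 / Real.sqrt (Real.log 2) < α) :
    ∫⁻ p in (cantorSetOf a) ×ˢ (cantorSetOf a),
        ENNReal.ofReal (|p.1 - p.2|⁻¹ * Real.exp (-α * ϑ (Real.log (1 / |p.1 - p.2|))))
        ∂(μ.prod μ) < ⊤ := by
  have hα0 : 0 ≤ α := (by positivity : (0 : ℝ) ≤ 1 / √(log 2)).trans hα.le
  set D : ℕ → ℝ := fun n => (a (n + 1))⁻¹ * energyKernel ϑ α (cantorLength a n)
  have hD : ∀ n, 0 ≤ 2⁻¹ ^ (n + 1) * D n := fun n => by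
    have ha_pos := (ha01 (n + 1) n.succ_pos).1
    have hℓ := cantorLength_pos (fun k hk => (ha01 k hk).2) n
    unfold D energyKernel; positivity
  -- On the diagonal the integrand is `0⁻¹ * _ = 0`.
  calc _ ≤ ∑' n, 2⁻¹ ^ (n + 1) * ENNReal.ofReal (D n) :=
        lintegral_cantorSetOf_prod_le ha01 μ hμ (by simp) fun n t b x y hx hy =>
          ENNReal.ofReal_le_ofReal (energyKernel_le_of_mem_cantorIntv_snoc hϑ_mono hα0 ha01 hx hy)
    _ = ENNReal.ofReal (∑' n, 2⁻¹ ^ (n + 1) * D n) := by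
        rw [ENNReal.ofReal_tsum_of_nonneg hD
          (summable_energy_series hϑ_mono hϑ_concave hϑ_nonneg hϑL hL_slow ha hα)]
        refine tsum_congr fun n => ?_
        rw [eq_comm, ENNReal.ofReal_mul (by positivity), ENNReal.ofReal_pow (by norm_num),
          ENNReal.ofReal_inv_of_pos two_pos, ENNReal.ofReal_ofNat]
    _ < ⊤ := ENNReal.ofReal_lt_top

/-- For the uniform measure `μ` on the Cantor set `Ω` built from the gap sequence
`a_n = 1 − e^{−(ϑ(n) − ϑ(n−1))}`, one has
`∫∫_{Ω×Ω} |x−y|^{−1} e^{−α ϑ(log 1/|x−y|)} μ(dx)μ(dy) < ∞` for every `α > (log 2)^{−1/2}`. -/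
theorem cantor_measure_energy_finite
    (ϑ : ℝ → ℝ)
    (hϑ_mono : MonotoneOn ϑ (Set.Ici 0))
    (hϑ_concave : ConcaveOn ℝ (Set.Ici 0) ϑ)
    (hϑ_nonneg : ∀ u, 0 ≤ u → 0 ≤ ϑ u)
    (hϑ_div : ∫⁻ u in Set.Ici (1 : ℝ), ENNReal.ofReal (u ^ (-(3 : ℝ) / 2) * ϑ u) = ⊤)
    (L : ℝ → ℝ)
    (hϑL : ∀ u : ℝ, 1 ≤ u → ϑ u = Real.sqrt u * L u)
    (hL_slow : ∀ c : ℝ, 0 < c → Tendsto (fun u => L (c * u) / L u) atTop (nhds 1))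
    (a : ℕ → ℝ)
    (ha : ∀ n : ℕ, a n = 1 - Real.exp (-(ϑ (n : ℝ) - ϑ ((n : ℝ) - 1))))
    (ha01 : ∀ n : ℕ, 1 ≤ n → a n ∈ Set.Ioo (0 : ℝ) 1)
    (μ : Measure ℝ) [IsProbabilityMeasure μ]
    (hμ : ∀ (n : ℕ) (s : Fin n → Bool), μ (cantorIntv a n s) = (2 : ENNReal)⁻¹ ^ n)
    (α : ℝ) (hα : 1 / Real.sqrt (Real.log 2) < α) :
    ∫⁻ p in (cantorSetOf a) ×ˢ (cantorSetOf a),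
        ENNReal.ofReal (|p.1 - p.2|⁻¹ * Real.exp (-α * ϑ (Real.log (1 / |p.1 - p.2|))))
        ∂(μ.prod μ) < ⊤ :=
  cantor_measure_energy_finite_general ϑ hϑ_mono hϑ_concave hϑ_nonneg L hϑL hL_slow a ha ha01 μ hμ α
    hα
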